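/- Let n ≥ 1, H ∈ (0,1) and t > 0. Let μ be the n-fold product of the centered Gaussian probability measure on ℝ with variance t^{2H/n}. Then the pushforward of μ under the map (x₁, …, x_n) ↦ x₁⋯x_n equals the measure on ℝ with Lebesgue density p_{n−1}(·, t), where p_{n−1}(x,t) = 2^{n−1} ∫₀^∞ ⋯ ∫₀^∞ g(x; s₁²) g(s₁; s₂²) ⋯ g(s_{n−2}; s_{n−1}²) g(s_{n−1}; t^{2H}) ds₁ ⋯ ds_{n−1} (for n = 1, p₀(x,t) = g(x; t^{2H})). -/

import Mathlib

open Real Set MeasureTheory ProbabilityTheory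
open scoped ENNReal NNReal

/-- Centered Gaussian density with variance `v`:
`g(x; v) = (2πv)^{-1/2} exp(−x²/(2v))`. -/
noncomputable def gauss (x v : ℝ) : ℝ :=
  (Real.sqrt (2 * Real.pi * v))⁻¹ * Real.exp (-x ^ 2 / (2 * v))

/-- Density `p_{m}(x,t)` of the weighted iterated fractional Brownian motion
`J^m_F(t) = B¹_H(|B²_H(… |B^{m+1}_H(t)|^{1/H} …)|^{1/H})`: `p₀(x,t) = g(x; t^{2H})`
and recursively `p_{m+1}(x,t) = 2 ∫₀^∞ g(x; s²) p_m(s,t) ds`, so that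
`p_{n−1}(x,t) = 2^{n−1} ∫₀^∞⋯∫₀^∞ g(x; s₁²) ⋯ g(s_{n−1}; t^{2H}) ds₁⋯ds_{n−1}`. -/
noncomputable def densJ (H : ℝ) : ℕ → ℝ → ℝ → ℝ
  | 0, x, t => gauss x (t ^ (2 * H))
  | m + 1, x, t => 2 * ∫ s in Set.Ioi (0 : ℝ), gauss x (s ^ 2) * densJ H m s t

noncomputable def qdens : ℕ → ℝ → ℝ → ℝ
  | 0, x, a => gauss x a
  | m + 1, x, a => 2 * ∫ s in Set.Ioi (0 : ℝ), gauss x (s ^ 2) * qdens m s a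

lemma densJ_eq_qdens (H : ℝ) (m : ℕ) (x t : ℝ) :
    densJ H m x t = qdens m x (t ^ (2 * H)) := by
  induction m generalizing x with
  | zero => rfl
  | succ m ih => simp only [densJ, qdens, ih]

lemma gauss_nonneg (x v : ℝ) : 0 ≤ gauss x v := by unfold gauss; positivity

lemma gauss_even (x v : ℝ) : gauss (-x) v = gauss x v := by simp [gauss]

lemma measurable_gauss_fst (a : ℝ) : Measurable fun x => gauss x a := by
  unfold gauss; fun_prop

lemma measurable_gauss_sq : Measurable fun p : ℝ × ℝ => gauss p.1 (p.2 ^ 2) := by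
  unfold gauss; fun_prop

lemma measurable_gauss_sq_mul (v : ℝ) :
    Measurable fun p : ℝ × ℝ => ENNReal.ofReal (gauss p.2 (p.1 ^ 2 * v)) := by
  unfold gauss; fun_prop

lemma gauss_eq_pdf {v : ℝ} (hv : 0 < v) (x : ℝ) :
    gauss x v = gaussianPDFReal 0 v.toNNReal x := by
  rw [gaussianPDFReal, Real.coe_toNNReal _ hv.le]; simp [gauss]

lemma gauss_scale {c : ℝ} (hc : 0 < c) (x a : ℝ) :
    gauss x (c ^ 2 * a) = c⁻¹ * gauss (x / c) a := by
  unfold gauss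
  have hexp : -x ^ 2 / (2 * (c ^ 2 * a)) = -(x / c) ^ 2 / (2 * a) := by
    rw [div_pow, neg_div, neg_div, neg_inj, div_div]
    ring_nf
  rw [hexp, show 2 * π * (c ^ 2 * a) = c ^ 2 * (2 * π * a) by ring,
    Real.sqrt_mul (sq_nonneg c), Real.sqrt_sq hc.le, mul_inv]
  ring

lemma qdens_nonneg (m : ℕ) (x a : ℝ) : 0 ≤ qdens m x a := by
  induction m generalizing x with
  | zero => exact gauss_nonneg x a
  | succ m ih =>
    have : 0 ≤ ∫ s in Set.Ioi (0 : ℝ), gauss x (s ^ 2) * qdens m s a :=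
      integral_nonneg fun s => mul_nonneg (gauss_nonneg _ _) (ih s)
    simpa [qdens] using this

lemma qdens_even (m : ℕ) (x a : ℝ) : qdens m (-x) a = qdens m x a := by
  induction m generalizing x with
  | zero => exact gauss_even x a
  | succ m ih => simp only [qdens, gauss_even]

lemma measurable_qdens (m : ℕ) (a : ℝ) : Measurable fun x => qdens m x a := by
  induction m with
  | zero =>
    simp only [qdens]
    exact measurable_gauss_fst a
  | succ m ih =>
    have hsm : StronglyMeasurable fun p : ℝ × ℝ => gauss p.1 (p.2 ^ 2) * qdens m p.2 a := by
      apply StronglyMeasurable.mul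
      · exact measurable_gauss_sq.stronglyMeasurable
      · exact (ih.comp measurable_snd).stronglyMeasurable
    have := hsm.integral_prod_right' (ν := volume.restrict (Set.Ioi (0 : ℝ)))
    simp only [qdens]
    exact this.measurable.const_mul 2

lemma qdens_scale {c : ℝ} (hc : 0 < c) (m : ℕ) (x a : ℝ) :
    qdens m x (c ^ 2 * a) = c⁻¹ * qdens m (x / c) a := by
  induction m generalizing x with
  | zero => exact gauss_scale hc x a
  | succ m ih =>
    have h1 : ∀ u : ℝ, gauss x ((c * u) ^ 2) * qdens m (c * u) (c ^ 2 * a)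
        = c⁻¹ * c⁻¹ * (gauss (x / c) (u ^ 2) * qdens m u a) := by
      intro u
      rw [mul_pow, gauss_scale hc, ih, mul_div_cancel_left₀ _ (ne_of_gt hc)]
      ring
    have h2 := MeasureTheory.integral_comp_mul_left_Ioi
      (fun s => gauss x (s ^ 2) * qdens m s (c ^ 2 * a)) 0 hc
    simp only [mul_zero, smul_eq_mul] at h2
    have h3 : (∫ s in Ioi (0:ℝ), gauss x (s ^ 2) * qdens m s (c ^ 2 * a))
        = c * ∫ u in Ioi (0:ℝ), gauss x ((c * u) ^ 2) * qdens m (c * u) (c ^ 2 * a) := by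
      rw [h2, ← mul_assoc, mul_inv_cancel₀ (ne_of_gt hc), one_mul]
    simp only [qdens]
    rw [h3]
    simp_rw [h1]
    rw [MeasureTheory.integral_const_mul]
    field_simp

lemma lintegral_comp_mul_left' {c : ℝ} (hc : 0 < c) {F : ℝ → ℝ≥0∞} (hF : Measurable F) :
    ∫⁻ s, F s = ENNReal.ofReal c * ∫⁻ u, F (c * u) := by
  have hmap := Real.map_volume_mul_left (ne_of_gt hc)
  rw [show (∫⁻ u, F (c * u)) = ∫⁻ s, F s ∂(Measure.map (c * ·) volume) from
    (lintegral_map hF (measurable_const_mul c)).symm, hmap, lintegral_smul_measure, smul_eq_mul,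
    ← mul_assoc, abs_of_pos (inv_pos.mpr hc), ← ENNReal.ofReal_mul hc.le,
    mul_inv_cancel₀ (ne_of_gt hc), ENNReal.ofReal_one, one_mul]

lemma integral_even_real {g : ℝ → ℝ} (hg : ∀ x, g (-x) = g x) (hint : Integrable g) :
    ∫ x, g x = 2 * ∫ x in Ioi (0:ℝ), g x := by
  have h1 : (∫ x in Iic (0:ℝ), g x) = ∫ x in Ioi (0:ℝ), g x := by
    have := integral_comp_neg_Ioi (c := (0:ℝ)) (f := g)
    simp only [hg, neg_zero] at this
    exact this.symm
  rw [← setIntegral_univ (f := g), ← Set.Iic_union_Ioi (a := (0:ℝ)),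
    MeasureTheory.setIntegral_union (Set.Iic_disjoint_Ioi le_rfl) measurableSet_Ioi
      hint.integrableOn hint.integrableOn, h1]
  ring

lemma key_lemma {v : ℝ} (hv : 0 < v) (f : ℝ → ℝ≥0∞) (hf : Measurable f) :
    Measure.map (fun p : ℝ × ℝ => p.1 * p.2)
        ((volume.withDensity f).prod (gaussianReal 0 v.toNNReal))
      = volume.withDensity fun x => ∫⁻ s, ENNReal.ofReal (gauss x (s ^ 2 * v)) * f s := by
  have hmul : Measurable fun p : ℝ × ℝ => p.1 * p.2 := measurable_fst.mul measurable_snd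
  ext A hA
  rw [Measure.map_apply hmul hA, Measure.prod_apply (hmul hA), withDensity_apply _ hA]
  have hae : ∀ᵐ s ∂(volume.withDensity f),
      gaussianReal 0 v.toNNReal (Prod.mk s ⁻¹' ((fun p : ℝ × ℝ => p.1 * p.2) ⁻¹' A))
        = ∫⁻ x in A, ENNReal.ofReal (gauss x (s ^ 2 * v)) := by
    have h0 : (volume.withDensity f) ({0} : Set ℝ) = 0 :=
      withDensity_absolutelyContinuous volume f (measure_singleton 0)
    filter_upwards [measure_eq_zero_iff_ae_notMem.mp h0] with s hs
    have hs0 : s ≠ 0 := by simpa using hs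
    have hpre : Prod.mk s ⁻¹' ((fun p : ℝ × ℝ => p.1 * p.2) ⁻¹' A) = (s * ·) ⁻¹' A := rfl
    have hv2 : (.mk (s ^ 2) (sq_nonneg s) * v.toNNReal : ℝ≥0) = (s ^ 2 * v).toNNReal := by
      ext
      simp [NNReal.coe_mul, Real.coe_toNNReal _ (by positivity : (0:ℝ) ≤ s ^ 2 * v),
        Real.coe_toNNReal _ hv.le]
    have hv2ne : (s ^ 2 * v).toNNReal ≠ 0 := by
      simp only [ne_eq, Real.toNNReal_eq_zero, not_le]
      positivity
    rw [hpre, ← Measure.map_apply (measurable_const_mul s) hA,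
      gaussianReal_map_const_mul, mul_zero, hv2, gaussianReal_apply _ hv2ne A]
    refine setLIntegral_congr_fun hA (fun x _ => ?_)
    rw [gaussianPDF, gauss_eq_pdf (by positivity)]
  rw [lintegral_congr_ae hae]
  have hG : Measurable fun s => ∫⁻ x in A, ENNReal.ofReal (gauss x (s ^ 2 * v)) :=
    Measurable.lintegral_prod_right' (measurable_gauss_sq_mul v)
  rw [lintegral_withDensity_eq_lintegral_mul volume hf hG]
  have hswap : (∫⁻ s, f s * ∫⁻ x in A, ENNReal.ofReal (gauss x (s ^ 2 * v)))
      = ∫⁻ x in A, ∫⁻ s, f s * ENNReal.ofReal (gauss x (s ^ 2 * v)) := by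
    have : ∀ s, f s * ∫⁻ x in A, ENNReal.ofReal (gauss x (s ^ 2 * v))
        = ∫⁻ x in A, f s * ENNReal.ofReal (gauss x (s ^ 2 * v)) := fun s =>
      (lintegral_const_mul (f s) ((measurable_gauss_sq_mul v).comp
        (measurable_const.prodMk measurable_id))).symm
    simp_rw [this]
    refine lintegral_lintegral_swap ?_
    have : Measurable fun p : ℝ × ℝ => f p.1 * ENNReal.ofReal (gauss p.2 (p.1 ^ 2 * v)) :=
      (hf.comp measurable_fst).mul ((measurable_gauss_sq_mul v).comp measurable_id)
    exact this.aemeasurable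
  simp only [Pi.mul_apply]
  rw [hswap]
  congr 1 with x
  congr 1 with s
  rw [mul_comm]

lemma main_lemma (m : ℕ) {v : ℝ} (hv : 0 < v) :
    Measure.map (fun x : Fin (m + 1) → ℝ => ∏ i, x i)
        (Measure.pi fun _ : Fin (m + 1) => gaussianReal 0 v.toNNReal)
      = volume.withDensity fun x => ENNReal.ofReal (qdens m x (v ^ (m + 1))) := by
  induction m generalizing v with
  | zero =>
    have h1 : (fun x : Fin 1 → ℝ => ∏ i, x i)
        = (MeasurableEquiv.funUnique (Fin 1) ℝ : (Fin 1 → ℝ) → ℝ) := by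
      funext x
      simp [Fin.prod_univ_one, MeasurableEquiv.funUnique]
    erw [h1, (measurePreserving_funUnique (gaussianReal 0 v.toNNReal) (Fin 1)).map_eq,
      gaussianReal_of_var_ne_zero _ (by simp only [ne_eq, Real.toNNReal_eq_zero, not_le]; exact hv)]
    refine withDensity_congr_ae (ae_of_all _ fun x => ?_)
    rw [gaussianPDF]
    simp only [qdens, zero_add, pow_one]
    rw [gauss_eq_pdf hv]
  | succ m ih =>
    have hprodfn : Measurable fun y : Fin (m + 1) → ℝ => ∏ j, y j :=
      Finset.measurable_prod _ fun i _ => measurable_pi_apply i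
    have hmul : Measurable fun p : ℝ × ℝ => p.1 * p.2 := measurable_fst.mul measurable_snd
    have hfmeas : Measurable fun s : ℝ => ENNReal.ofReal (qdens m s (v ^ (m + 1))) :=
      (measurable_qdens m (v ^ (m + 1))).ennreal_ofReal
    -- Claim A : change of variables in the mixing density
    have hA : (fun x => ∫⁻ s, ENNReal.ofReal (gauss x (s ^ 2 * v)) *
          ENNReal.ofReal (qdens m s (v ^ (m + 1))))
        = fun x => ∫⁻ s, ENNReal.ofReal (gauss x (s ^ 2)) *
          ENNReal.ofReal (qdens m s (v ^ (m + 2))) := by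
      funext x
      have hc : (0:ℝ) < Real.sqrt v := Real.sqrt_pos.mpr hv
      have hc2 : Real.sqrt v ^ 2 = v := Real.sq_sqrt hv.le
      have hFmeas : Measurable fun s : ℝ => ENNReal.ofReal (gauss x (s ^ 2 * v)) *
          ENNReal.ofReal (qdens m s (v ^ (m + 1))) :=
        ((measurable_gauss_sq_mul v).comp (measurable_id.prodMk measurable_const)).mul hfmeas
      have hF2 : Measurable fun u : ℝ => ENNReal.ofReal (gauss x (((Real.sqrt v)⁻¹ * u) ^ 2 * v)) *
          ENNReal.ofReal (qdens m ((Real.sqrt v)⁻¹ * u) (v ^ (m + 1))) :=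
        hFmeas.comp (measurable_const_mul (Real.sqrt v)⁻¹)
      rw [lintegral_comp_mul_left' (inv_pos.mpr hc) hFmeas, ← lintegral_const_mul _ hF2]
      refine lintegral_congr fun u => ?_
      have h1 : ((Real.sqrt v)⁻¹ * u) ^ 2 * v = u ^ 2 := by
        rw [mul_pow, inv_pow, hc2]
        field_simp
      have h2 : (Real.sqrt v)⁻¹ * qdens m ((Real.sqrt v)⁻¹ * u) (v ^ (m + 1))
          = qdens m u (v ^ (m + 2)) := by
        have hs := qdens_scale hc m u (v ^ (m + 1))
        rw [hc2, ← pow_succ'] at hs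
        rw [← div_eq_inv_mul u, ← hs]
      rw [h1, mul_left_comm, ← ENNReal.ofReal_mul (inv_nonneg.mpr hc.le), h2]
    -- the chain of measure identifications
    have hchain : Measure.map (fun x : Fin (m + 2) → ℝ => ∏ i, x i)
          (Measure.pi fun _ : Fin (m + 2) => gaussianReal 0 v.toNNReal)
        = volume.withDensity fun x => ∫⁻ s, ENNReal.ofReal (gauss x (s ^ 2)) *
            ENNReal.ofReal (qdens m s (v ^ (m + 2))) := by
      have hfun : (fun x : Fin (m + 2) → ℝ => ∏ i, x i)
          = (fun p : ℝ × (Fin (m + 1) → ℝ) => p.1 * ∏ j, p.2 j)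
            ∘ (MeasurableEquiv.piFinSuccAbove (fun _ : Fin (m + 2) => ℝ) 0) := by
        funext x
        simp only [Function.comp_apply, MeasurableEquiv.piFinSuccAbove,
          MeasurableEquiv.coe_mk, Fin.insertNthEquiv_symm_apply, Fin.removeNth]
        exact Fin.prod_univ_succAbove x 0
      have houter : Measurable fun p : ℝ × (Fin (m + 1) → ℝ) => p.1 * ∏ j, p.2 j :=
        measurable_fst.mul (hprodfn.comp measurable_snd)
      rw [hfun, ← Measure.map_map houter (MeasurableEquiv.piFinSuccAbove
          (fun _ : Fin (m + 2) => ℝ) 0).measurable,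
        (measurePreserving_piFinSuccAbove (fun _ : Fin (m + 2) =>
          gaussianReal 0 v.toNNReal) 0).map_eq]
      have hdec : (fun p : ℝ × (Fin (m + 1) → ℝ) => p.1 * ∏ j, p.2 j)
          = (fun p : ℝ × ℝ => p.1 * p.2)
            ∘ (Prod.map id fun y : Fin (m + 1) → ℝ => ∏ j, y j) := rfl
      rw [hdec, ← Measure.map_map hmul (measurable_id.prodMap hprodfn),
        ← Measure.map_prod_map _ _ measurable_id hprodfn, Measure.map_id, ih hv,
        ← Measure.prod_swap, Measure.map_map hmul measurable_swap]
      have hswapfun : ((fun p : ℝ × ℝ => p.1 * p.2) ∘ Prod.swap) = fun p : ℝ × ℝ => p.1 * p.2 := by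
        funext p
        exact mul_comm _ _
      rw [hswapfun, key_lemma hv _ hfmeas, hA]
    rw [hchain]
    -- a.e. identification of the density
    set a := v ^ (m + 2) with ha
    have hLmeas : Measurable fun x => ∫⁻ s, ENNReal.ofReal (gauss x (s ^ 2)) *
        ENNReal.ofReal (qdens m s a) := by
      exact Measurable.lintegral_prod_right'
        (f := fun p : ℝ × ℝ => ENNReal.ofReal (gauss p.1 (p.2 ^ 2)) *
          ENNReal.ofReal (qdens m p.2 a))
        ((measurable_gauss_sq.ennreal_ofReal).mul
          (((measurable_qdens m a).comp measurable_snd).ennreal_ofReal))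
    have hP : IsProbabilityMeasure (Measure.map (fun x : Fin (m + 2) → ℝ => ∏ i, x i)
        (Measure.pi fun _ : Fin (m + 2) => gaussianReal 0 v.toNNReal)) :=
      Measure.isProbabilityMeasure_map (Finset.measurable_prod _
        fun i _ => measurable_pi_apply i).aemeasurable
    have htot : (∫⁻ x, ∫⁻ s, ENNReal.ofReal (gauss x (s ^ 2)) *
        ENNReal.ofReal (qdens m s a)) = 1 := by
      have h1 : (volume.withDensity fun x => ∫⁻ s, ENNReal.ofReal (gauss x (s ^ 2)) *
          ENNReal.ofReal (qdens m s a)) Set.univ = 1 := by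
        rw [← hchain]
        exact hP.measure_univ
      rwa [withDensity_apply _ MeasurableSet.univ, Measure.restrict_univ] at h1
    have hfin : ∀ᵐ x : ℝ, (∫⁻ s, ENNReal.ofReal (gauss x (s ^ 2)) *
        ENNReal.ofReal (qdens m s a)) < ∞ :=
      ae_lt_top hLmeas (htot ▸ ENNReal.one_ne_top)
    refine withDensity_congr_ae ?_
    filter_upwards [hfin] with x hx
    have hgnn : ∀ s : ℝ, 0 ≤ gauss x (s ^ 2) * qdens m s a :=
      fun s => mul_nonneg (gauss_nonneg _ _) (qdens_nonneg _ _ _)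
    have hgmeas : Measurable fun s : ℝ => gauss x (s ^ 2) * qdens m s a :=
      ((measurable_gauss_sq.comp (measurable_const.prodMk measurable_id)).mul
        (measurable_qdens m a))
    have hofReal : ∀ s : ℝ, ENNReal.ofReal (gauss x (s ^ 2)) * ENNReal.ofReal (qdens m s a)
        = ENNReal.ofReal (gauss x (s ^ 2) * qdens m s a) :=
      fun s => (ENNReal.ofReal_mul (gauss_nonneg _ _)).symm
    simp_rw [hofReal] at hx ⊢
    have hint : Integrable fun s : ℝ => gauss x (s ^ 2) * qdens m s a :=
      ⟨hgmeas.aestronglyMeasurable,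
        (hasFiniteIntegral_iff_ofReal (ae_of_all _ hgnn)).mpr hx⟩
    have heven : ∀ s : ℝ, gauss x ((-s) ^ 2) * qdens m (-s) a
        = gauss x (s ^ 2) * qdens m s a := by
      intro s
      rw [neg_sq, qdens_even]
    have hL : (∫⁻ s, ENNReal.ofReal (gauss x (s ^ 2) * qdens m s a))
        = ENNReal.ofReal (∫ s, gauss x (s ^ 2) * qdens m s a) :=
      (ofReal_integral_eq_lintegral_ofReal hint (ae_of_all _ hgnn)).symm
    rw [hL]
    congr 1
    rw [integral_even_real heven hint]
    simp only [qdens]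

/-- Factorization `J^{n−1}_F(t) ≐ ∏_{i=1}^n B^i_{H/n}(t)`: for `n ≥ 1`, `H ∈ (0,1)`
and `t > 0`, the pushforward of the `n`-fold product of centered Gaussian measures
with variance `t^{2H/n}` under `(x₁,…,x_n) ↦ x₁⋯x_n` is the measure with Lebesgue
density `p_{n−1}(·,t)`. -/
theorem product_fbm_factorization (n : ℕ) (hn : 1 ≤ n) (H t : ℝ)
    (hH : H ∈ Set.Ioo (0 : ℝ) 1) (ht : 0 < t) :
    Measure.map (fun x : Fin n → ℝ => ∏ i, x i)
        (Measure.pi fun _ : Fin n => gaussianReal 0 (t ^ (2 * H / n)).toNNReal)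
      = volume.withDensity (fun x => ENNReal.ofReal (densJ H (n - 1) x t)) := by
  obtain ⟨m, rfl⟩ : ∃ m, n = m + 1 := ⟨n - 1, (Nat.succ_pred_eq_of_pos hn).symm⟩
  have hv : (0:ℝ) < t ^ (2 * H / ((m + 1 : ℕ) : ℝ)) := Real.rpow_pos_of_pos ht _
  rw [main_lemma m hv]
  refine withDensity_congr_ae (ae_of_all _ fun x => ?_)
  simp only [densJ_eq_qdens]
  congr 2
  rw [← Real.rpow_natCast (t ^ (2 * H / ((m + 1 : ℕ) : ℝ))) (m + 1), ← Real.rpow_mul ht.le]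
  congr 1
  have hne : ((m + 1 : ℕ) : ℝ) ≠ 0 := by positivity
  field_simp
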